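/- arXiv:2604.20832 — 2 statements merged into one kernel-verified Lean document; each statement's English description precedes it below -/
import Mathlib

section
/- Let S ⊆ ℝ^m be a nonempty compact convex set, A a real n×m matrix, ρ > 0, and v ∈ ℝ^n. Suppose β⋆ ∈ S minimizes the function β ↦ ‖Aβ + ρv‖² over S. Then y⋆ := v + (1/ρ) A β⋆ is the unique global minimizer over ℝ^n of F(y) = sup_{β ∈ S} (−⟨y, Aβ⟩) + (ρ/2)‖y − v‖²; that is, y⋆ = prox_{f̃/ρ}(v) where f̃(y) = sup_{β ∈ S}(−⟨y, Aβ⟩). -/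
/-!
Put `u = Aβ⋆` and `y⋆ = v + ρ⁻¹ u`. Since `u` is the projection of `-ρ v` onto the convex set
`A(S)` and `-ρ v - u = -ρ y⋆`, the variational inequality of the projection says that the
supremum of `w ↦ -⟪y⋆, w⟫` over `A(S)` is attained at `u`. At any other `z` that supremum is at
least `-⟪z, u⟫`, and completing the square in `-⟪z, u⟫ + ρ/2 ‖z - v‖²` gives
`F z ≥ F y⋆ + ρ/2 ‖z - y⋆‖²`, hence both minimality and uniqueness.
-/

open RealInnerProductSpace

/-- The objective of the proximal subproblem arising in the ADMM y-update:
`F(y) = sup_{β ∈ S} (−⟨y, Aβ⟩) + (ρ/2)‖y − v‖²`. -/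
noncomputable def proxObjective (n m : ℕ) (S : Set (EuclideanSpace ℝ (Fin m)))
    (A : Matrix (Fin n) (Fin m) ℝ) (ρ : ℝ) (v : EuclideanSpace ℝ (Fin n))
    (y : EuclideanSpace ℝ (Fin n)) : ℝ :=
  sSup ((fun β => -(inner ℝ y (Matrix.toEuclideanLin A β) : ℝ)) '' S) + ρ / 2 * ‖y - v‖ ^ 2

theorem forall_le_and_unique_of_quadratic_growth {X : Type*} [MetricSpace X] {f : X → ℝ}
    {x : X} {c : ℝ} (hc : 0 < c) (hgrowth : ∀ z, f x + c * dist z x ^ 2 ≤ f z) :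
    (∀ z, f x ≤ f z) ∧ ∀ y, (∀ z, f y ≤ f z) → y = x := by
  refine ⟨fun z => le_of_add_le_of_nonneg_left (hgrowth z) (by positivity), fun y hy => ?_⟩
  have hgap : c * dist y x ^ 2 ≤ 0 := by linarith [hgrowth y, hy x]
  exact dist_le_zero.1 ((sq_nonpos_iff _).1 (nonpos_of_mul_nonpos_right hgap hc)).le

section InnerProductSpace

variable {F : Type*} [NormedAddCommGroup F] [InnerProductSpace ℝ F]

noncomputable def proxObjectiveOn (K : Set F) (ρ : ℝ) (v y : F) : ℝ :=
  sSup ((fun w => -⟪y, w⟫) '' K) + ρ / 2 * ‖y - v‖ ^ 2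

theorem neg_inner_add_half_mul_norm_sub_sq {ρ : ℝ} (hρ : ρ ≠ 0) (u v z : F) :
    -⟪z, u⟫ + ρ / 2 * ‖z - v‖ ^ 2
      = -⟪v + ρ⁻¹ • u, u⟫ + ρ / 2 * ‖v + ρ⁻¹ • u - v‖ ^ 2
        + ρ / 2 * ‖z - (v + ρ⁻¹ • u)‖ ^ 2 := by
  have hz : z - v = z - (v + ρ⁻¹ • u) + ρ⁻¹ • u := by abel
  rw [hz, add_sub_cancel_left, norm_add_sq_real, norm_smul, real_inner_smul_right,
    inner_sub_left, inner_add_left, real_inner_smul_left, real_inner_self_eq_norm_sq,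
    Real.norm_eq_abs, mul_pow, sq_abs]
  field_simp
  ring

theorem isGreatest_neg_inner_of_isMinOn_norm {K : Set F} (hK : Convex ℝ K) {ρ : ℝ} (hρ : 0 < ρ)
    {u v : F} (hu : u ∈ K) (hmin : IsMinOn (fun w => ‖w + ρ • v‖) K u) :
    IsGreatest ((fun w => -⟪v + ρ⁻¹ • u, w⟫) '' K) (-⟪v + ρ⁻¹ • u, u⟫) := by
  have hdist : ∀ w, ‖-(ρ • v) - w‖ = ‖w + ρ • v‖ := fun w => by
    rw [← norm_neg, neg_sub, sub_neg_eq_add]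
  have hvi := (norm_eq_iInf_iff_real_inner_le_zero (u := -(ρ • v)) hK hu).1 <| by
    simpa only [hdist] using (hmin.iInf_eq hu).symm
  have hres : -(ρ • v) - u = -ρ • (v + ρ⁻¹ • u) := by
    rw [smul_add, smul_smul, neg_mul, mul_inv_cancel₀ hρ.ne', neg_smul, neg_smul, one_smul]
    abel
  refine ⟨Set.mem_image_of_mem _ hu, Set.forall_mem_image.2 fun w hw => ?_⟩
  have := hvi w hw
  rw [hres, real_inner_smul_left, inner_sub_right] at this
  nlinarith

theorem proxObjectiveOn_add_mul_dist_sq_le {K : Set F} (hK : Convex ℝ K)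
    (hKb : Bornology.IsBounded K) {ρ : ℝ} (hρ : 0 < ρ) {u v : F} (hu : u ∈ K)
    (hmin : IsMinOn (fun w => ‖w + ρ • v‖) K u) (z : F) :
    proxObjectiveOn K ρ v (v + ρ⁻¹ • u) + ρ / 2 * dist z (v + ρ⁻¹ • u) ^ 2
      ≤ proxObjectiveOn K ρ v z := by
  have hsup := (isGreatest_neg_inner_of_isMinOn_norm hK hρ hu hmin).csSup_eq
  have hbdd : BddAbove ((fun w => -⟪z, w⟫) '' K) :=
    ((-innerSL ℝ z).lipschitz.isBounded_image hKb).bddAbove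
  have hle : -⟪z, u⟫ ≤ sSup ((fun w => -⟪z, w⟫) '' K) :=
    le_csSup hbdd (Set.mem_image_of_mem _ hu)
  rw [proxObjectiveOn, proxObjectiveOn, hsup, dist_eq_norm]
  linarith [neg_inner_add_half_mul_norm_sub_sq hρ.ne' u v z]

end InnerProductSpace

theorem proxObjective_eq_proxObjectiveOn (n m : ℕ) (S : Set (EuclideanSpace ℝ (Fin m)))
    (A : Matrix (Fin n) (Fin m) ℝ) (ρ : ℝ) (v : EuclideanSpace ℝ (Fin n)) :
    proxObjective n m S A ρ v = proxObjectiveOn (Matrix.toEuclideanLin A '' S) ρ v := by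
  funext y
  rw [proxObjective, proxObjectiveOn, Set.image_image]

theorem prox_via_generalized_projection_general (n m : ℕ) (S : Set (EuclideanSpace ℝ (Fin m)))
    (hScp : IsCompact S) (hScv : Convex ℝ S)
    (A : Matrix (Fin n) (Fin m) ℝ) (ρ : ℝ) (hρ : 0 < ρ)
    (v : EuclideanSpace ℝ (Fin n))
    (βstar : EuclideanSpace ℝ (Fin m)) (hβstar : βstar ∈ S)
    (hmin : ∀ β ∈ S, ‖Matrix.toEuclideanLin A βstar + ρ • v‖ ^ 2
        ≤ ‖Matrix.toEuclideanLin A β + ρ • v‖ ^ 2) :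
    (∀ z : EuclideanSpace ℝ (Fin n),
        proxObjective n m S A ρ v (v + ρ⁻¹ • Matrix.toEuclideanLin A βstar)
          ≤ proxObjective n m S A ρ v z) ∧
    (∀ y : EuclideanSpace ℝ (Fin n),
        (∀ z : EuclideanSpace ℝ (Fin n), proxObjective n m S A ρ v y ≤ proxObjective n m S A ρ v z)
          → y = v + ρ⁻¹ • Matrix.toEuclideanLin A βstar) := by
  set T := Matrix.toEuclideanLin A
  have hproj : IsMinOn (fun w => ‖w + ρ • v‖) (T '' S) (T βstar) :=
    isMinOn_iff.2 <| Set.forall_mem_image.2 fun β hβ =>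
      (pow_le_pow_iff_left₀ (norm_nonneg _) (norm_nonneg _) two_ne_zero).1 (hmin β hβ)
  have hK : Bornology.IsBounded (T '' S) :=
    (hScp.image T.continuous_of_finiteDimensional).isBounded
  rw [proxObjective_eq_proxObjectiveOn]
  exact forall_le_and_unique_of_quadratic_growth (half_pos hρ) <|
    proxObjectiveOn_add_mul_dist_sq_le (hScv.linear_image T) hK hρ (Set.mem_image_of_mem T hβstar)
      hproj

/-- If `β⋆ ∈ S` minimizes `β ↦ ‖Aβ + ρv‖²` over the nonempty compact convex
set `S` (a generalized projection of `−ρv` onto `S`), then `y⋆ = v + (1/ρ)Aβ⋆` is the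
unique global minimizer of `F(y) = sup_{β ∈ S}(−⟨y, Aβ⟩) + (ρ/2)‖y − v‖²`, i.e.
`y⋆ = prox_{f̃/ρ}(v)`. -/
theorem prox_via_generalized_projection (n m : ℕ) (S : Set (EuclideanSpace ℝ (Fin m)))
    (hSne : S.Nonempty) (hScp : IsCompact S) (hScv : Convex ℝ S)
    (A : Matrix (Fin n) (Fin m) ℝ) (ρ : ℝ) (hρ : 0 < ρ)
    (v : EuclideanSpace ℝ (Fin n))
    (βstar : EuclideanSpace ℝ (Fin m)) (hβstar : βstar ∈ S)
    (hmin : ∀ β ∈ S, ‖Matrix.toEuclideanLin A βstar + ρ • v‖ ^ 2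
        ≤ ‖Matrix.toEuclideanLin A β + ρ • v‖ ^ 2) :
    (∀ z : EuclideanSpace ℝ (Fin n),
        proxObjective n m S A ρ v (v + ρ⁻¹ • Matrix.toEuclideanLin A βstar)
          ≤ proxObjective n m S A ρ v z) ∧
    (∀ y : EuclideanSpace ℝ (Fin n),
        (∀ z : EuclideanSpace ℝ (Fin n), proxObjective n m S A ρ v y ≤ proxObjective n m S A ρ v z)
          → y = v + ρ⁻¹ • Matrix.toEuclideanLin A βstar) :=
  prox_via_generalized_projection_general n m S hScp hScv A ρ hρ v βstar hβstar hmin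
end

section
/- Let E = ℝ^n with the Euclidean norm, let f̃ : E → ℝ be convex and continuous, let C ⊆ E be a nonempty compact convex set, and let ρ > 0. Let sequences (y^k), (c^k), (u^k) in E satisfy: c⁰ ∈ C, u⁰ = 0, and for every k, (i) y^{k+1} is the unique minimizer over E of z ↦ f̃(z) + (ρ/2)‖z − c^k + u^k‖², (ii) c^{k+1} is the metric projection of y^{k+1} + u^k onto C, and (iii) u^{k+1} = u^k + y^{k+1} − c^{k+1}. Assume there exist c⋆ ∈ C and u⋆ ∈ E such that f̃(c⋆) ≤ f̃(y) + ρ⟨u⋆, y − c⟩ for all y ∈ E and all c ∈ C. Then as k → ∞: (1) the primal residual satisfies ‖y^{k+1} − c^{k+1}‖ → 0; (2) the dual residual satisfies ρ‖c^{k+1} − c^k‖ → 0; (3) f̃(y^k) → inf_{c ∈ C} f̃(c). -/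
/-! The projection step keeps the scaled dual `u^k` in the normal cone of `C` at `c^k`, and the
proximal step is a subgradient inequality for `f̃` at `y^{k+1}`. Tested against the saddle point
`(c⋆, u⋆)`, these make `V^k = ‖u^k - u⋆‖² + ‖c^k - c⋆‖²` drop by at least
`‖y^{k+1} - c^{k+1}‖² + ‖c^{k+1} - c^k‖²` in every step. So both residuals are square summable and
the iterates stay bounded, and `f̃(y^{k+1})` is squeezed to `f̃(c⋆) = min_C f̃` between the saddle
inequality and the proximal inequality at `c⋆`. -/

open Filter Topology
open scoped RealInnerProductSpace

theorem nonneg_of_forall_nonneg_add_mul {A B : ℝ} (h : ∀ t : ℝ, 0 < t → t ≤ 1 → 0 ≤ A + t * B) :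
    0 ≤ A := by
  have hlim : Tendsto (fun t : ℝ => A + t * B) (𝓝[>] 0) (𝓝 A) := by
    refine ((?_ : Continuous fun t : ℝ => A + t * B).tendsto' 0 A (by simp)).mono_left
      nhdsWithin_le_nhds
    fun_prop
  refine ge_of_tendsto hlim ?_
  filter_upwards [Ioc_mem_nhdsGT one_pos] with t ht using h t ht.1 ht.2

theorem summable_of_succ_add_le {V a : ℕ → ℝ} (hV : ∀ k, 0 ≤ V k) (ha : ∀ k, 0 ≤ a k)
    (h : ∀ k, V (k + 1) + a k ≤ V k) : Summable a :=
  summable_of_sum_range_le ha fun n => calc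
    ∑ i ∈ Finset.range n, a i ≤ ∑ i ∈ Finset.range n, (V i - V (i + 1)) :=
      Finset.sum_le_sum fun i _ => by linarith [h i]
    _ = V 0 - V n := Finset.sum_range_sub' V n
    _ ≤ V 0 := by linarith [hV n]

theorem tendsto_zero_of_norm_sq_le {ι F : Type*} [SeminormedAddGroup F] {l : Filter ι}
    {x : ι → F} {a : ι → ℝ} (hx : ∀ i, ‖x i‖ ^ 2 ≤ a i) (ha : Tendsto a l (𝓝 0)) :
    Tendsto x l (𝓝 0) := by
  refine squeeze_zero_norm (fun i => ?_) (by simpa using ha.sqrt)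
  exact (Real.le_sqrt (norm_nonneg _) ((sq_nonneg _).trans (hx i))).2 (hx i)

section InnerProductSpace

variable {E : Type*} [NormedAddCommGroup E] [InnerProductSpace ℝ E]

theorem ConvexOn.add_inner_le_of_isMinOn {s : Set E} {f : E → ℝ} (hf : ConvexOn ℝ s f) {ρ : ℝ}
    {a x z : E} (hmin : IsMinOn (fun w => f w + ρ / 2 * ‖w - a‖ ^ 2) s x) (hx : x ∈ s)
    (hz : z ∈ s) : f x + ρ * ⟪a - x, z - x⟫ ≤ f z := by
  refine sub_nonneg.1 <|
    nonneg_of_forall_nonneg_add_mul (B := ρ / 2 * ‖z - x‖ ^ 2) fun t ht ht1 => ?_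
  have hseg : x + t • (z - x) = (1 - t) • x + t • z := by module
  have hmem : x + t • (z - x) ∈ s := hseg ▸ hf.1 hx hz (by linarith) ht.le (by ring)
  have hconv : f (x + t • (z - x)) ≤ (1 - t) * f x + t * f z :=
    hseg ▸ hf.2 hx hz (by linarith) ht.le (by ring)
  have hsq : ‖x + t • (z - x) - a‖ ^ 2
      = ‖x - a‖ ^ 2 - 2 * t * ⟪a - x, z - x⟫ + t ^ 2 * ‖z - x‖ ^ 2 := by
    rw [show x + t • (z - x) - a = (x - a) + t • (z - x) by abel, norm_add_sq_real,
      inner_smul_right, norm_smul, mul_pow, Real.norm_eq_abs, sq_abs, ← neg_sub a x, inner_neg_left]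
    ring
  have hquad : 0 ≤ t * (f z - (f x + ρ * ⟪a - x, z - x⟫) + t * (ρ / 2 * ‖z - x‖ ^ 2)) := by
    have hle : f x + ρ / 2 * ‖x - a‖ ^ 2
        ≤ f (x + t • (z - x)) + ρ / 2 * ‖x + t • (z - x) - a‖ ^ 2 := hmin hmem
    rw [hsq] at hle
    linarith
  exact (mul_nonneg_iff_of_pos_left ht).1 hquad

theorem inner_sub_nonpos_of_forall_norm_sub_le {C : Set E} (hC : Convex ℝ C) {p x w : E}
    (hx : x ∈ C) (hproj : ∀ w ∈ C, ‖p - x‖ ≤ ‖p - w‖) (hw : w ∈ C) : ⟪p - x, w - x⟫ ≤ 0 := by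
  have hmin : IsMinOn (fun v => (0 : ℝ) + 1 / 2 * ‖v - p‖ ^ 2) C x := fun v hv => by
    simp only [Set.mem_ofPred_eq, norm_sub_rev _ p]
    gcongr
    exact hproj v hv
  simpa using (convexOn_const 0 hC).add_inner_le_of_isMinOn hmin hx hw

theorem tendsto_inner_zero_of_norm_le {ι : Type*} {l : Filter ι} {a b : ι → E} {M : ℝ}
    (ha : ∀ i, ‖a i‖ ≤ M) (hb : Tendsto b l (𝓝 0)) : Tendsto (fun i => ⟪a i, b i⟫) l (𝓝 0) :=
  hb.op_zero_isBoundedUnder_le (isBoundedUnder_of ⟨M, ha⟩) (fun b a => ⟪a, b⟫) fun b a => by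
    rw [mul_comm]; exact norm_inner_le_norm a b

/-- `hkey` is the proximal inequality at `cs` combined with the saddle inequality; the other
hypotheses say that the duals `u` and `u + y' - c'` are normal to `C` at `c` and `c'`. -/
theorem admm_one_step_descent {c u y' c' cs us : E}
    (hkey : ⟪c - u - y', cs - y'⟫ ≤ ⟪us, y' - c'⟫)
    (hu : ⟪u, c' - c⟫ ≤ 0) (hu' : ⟪u + y' - c', c - c'⟫ ≤ 0) (hcs : ⟪u + y' - c', cs - c'⟫ ≤ 0) :
    ‖u + y' - c' - us‖ ^ 2 + ‖c' - cs‖ ^ 2 + (‖y' - c'‖ ^ 2 + ‖c' - c‖ ^ 2)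
      ≤ ‖u - us‖ ^ 2 + ‖c - cs‖ ^ 2 := by
  -- `simp` uses `real_inner_comm` as an ordered rewrite, so all inner products reach normal form
  simp only [← real_inner_self_eq_norm_sq, inner_add_left, inner_add_right, inner_sub_left,
    inner_sub_right, real_inner_comm] at *
  linarith

end InnerProductSpace

structure IsADMMSeq {E : Type*} [NormedAddCommGroup E] (f : E → ℝ) (C : Set E) (ρ : ℝ)
    (y c u : ℕ → E) : Prop where
  mem_zero : c 0 ∈ C
  dual_zero : u 0 = 0
  prox_min : ∀ k z, f (y (k + 1)) + ρ / 2 * ‖y (k + 1) - c k + u k‖ ^ 2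
    ≤ f z + ρ / 2 * ‖z - c k + u k‖ ^ 2
  proj : ∀ k, c (k + 1) ∈ C ∧ ∀ w ∈ C, ‖y (k + 1) + u k - c (k + 1)‖ ≤ ‖y (k + 1) + u k - w‖
  dual_succ : ∀ k, u (k + 1) = u k + y (k + 1) - c (k + 1)

def admmLyapunov {E : Type*} [NormedAddCommGroup E] (u c : ℕ → E) (us cs : E) (k : ℕ) : ℝ :=
  ‖u k - us‖ ^ 2 + ‖c k - cs‖ ^ 2

namespace IsADMMSeq

variable {E : Type*} [NormedAddCommGroup E] {f : E → ℝ} {C : Set E} {ρ : ℝ} {y c u : ℕ → E}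
  {cs us : E}

theorem mem (h : IsADMMSeq f C ρ y c u) : ∀ k, c k ∈ C
  | 0 => h.mem_zero
  | k + 1 => (h.proj k).1

variable [InnerProductSpace ℝ E]

theorem inner_dual_nonpos (h : IsADMMSeq f C ρ y c u) (hC : Convex ℝ C) :
    ∀ k, ∀ w ∈ C, ⟪u k, w - c k⟫ ≤ 0
  | 0, w, _ => by simp [h.dual_zero]
  | k + 1, w, hw => by
    simpa [add_comm (y _), ← h.dual_succ k] using
      inner_sub_nonpos_of_forall_norm_sub_le hC (h.proj k).1 (h.proj k).2 hw

theorem prox_le (h : IsADMMSeq f C ρ y c u) (hf : ConvexOn ℝ Set.univ f) (k : ℕ) (z : E) :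
    f (y (k + 1)) + ρ * ⟪c k - u k - y (k + 1), z - y (k + 1)⟫ ≤ f z := by
  refine hf.add_inner_le_of_isMinOn (fun w _ => ?_) (Set.mem_univ _) (Set.mem_univ z)
  simpa only [Set.mem_ofPred_eq, sub_sub_eq_add_sub, add_sub_right_comm] using h.prox_min k w

theorem lyapunov_succ_add_le (h : IsADMMSeq f C ρ y c u) (hf : ConvexOn ℝ Set.univ f)
    (hC : Convex ℝ C) (hρ : 0 < ρ) (hcs : cs ∈ C)
    (hsaddle : ∀ yy, ∀ cc ∈ C, f cs ≤ f yy + ρ * ⟪us, yy - cc⟫) (k : ℕ) :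
    admmLyapunov u c us cs (k + 1) + (‖y (k + 1) - c (k + 1)‖ ^ 2 + ‖c (k + 1) - c k‖ ^ 2)
      ≤ admmLyapunov u c us cs k := by
  have hkey : ⟪c k - u k - y (k + 1), cs - y (k + 1)⟫ ≤ ⟪us, y (k + 1) - c (k + 1)⟫ := by
    refine le_of_mul_le_mul_left ?_ hρ
    linarith [h.prox_le hf k cs, hsaddle (y (k + 1)) (c (k + 1)) (h.mem (k + 1))]
  have hnormal := h.inner_dual_nonpos hC
  have hnormal' := hnormal (k + 1)
  rw [h.dual_succ k] at hnormal'
  simpa only [admmLyapunov, h.dual_succ k] using admm_one_step_descent hkey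
    (hnormal k _ (h.mem (k + 1))) (hnormal' _ (h.mem k)) (hnormal' cs hcs)

theorem tendsto_residuals (h : IsADMMSeq f C ρ y c u) (hf : ConvexOn ℝ Set.univ f)
    (hC : Convex ℝ C) (hρ : 0 < ρ) (hcs : cs ∈ C)
    (hsaddle : ∀ yy, ∀ cc ∈ C, f cs ≤ f yy + ρ * ⟪us, yy - cc⟫) :
    Tendsto (fun k => y (k + 1) - c (k + 1)) atTop (𝓝 0) ∧
      Tendsto (fun k => c (k + 1) - c k) atTop (𝓝 0) := by
  have hsq := (summable_of_succ_add_le (fun k => by unfold admmLyapunov; positivity)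
    (fun k => by positivity) (h.lyapunov_succ_add_le hf hC hρ hcs hsaddle)).tendsto_atTop_zero
  exact ⟨tendsto_zero_of_norm_sq_le (fun k => le_add_of_nonneg_right (sq_nonneg _)) hsq,
    tendsto_zero_of_norm_sq_le (fun k => le_add_of_nonneg_left (sq_nonneg _)) hsq⟩

theorem norm_sub_le_sqrt_lyapunov (h : IsADMMSeq f C ρ y c u) (hf : ConvexOn ℝ Set.univ f)
    (hC : Convex ℝ C) (hρ : 0 < ρ) (hcs : cs ∈ C)
    (hsaddle : ∀ yy, ∀ cc ∈ C, f cs ≤ f yy + ρ * ⟪us, yy - cc⟫) (k : ℕ) :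
    ‖u k - us‖ ≤ √(admmLyapunov u c us cs 0) ∧ ‖c k - cs‖ ≤ √(admmLyapunov u c us cs 0) := by
  have hle : admmLyapunov u c us cs k ≤ admmLyapunov u c us cs 0 :=
    antitone_nat_of_succ_le (fun k => by
      linarith [h.lyapunov_succ_add_le hf hC hρ hcs hsaddle k, sq_nonneg ‖y (k + 1) - c (k + 1)‖,
        sq_nonneg ‖c (k + 1) - c k‖]) k.zero_le
  unfold admmLyapunov at hle ⊢
  exact ⟨Real.le_sqrt_of_sq_le (by linarith [sq_nonneg ‖c k - cs‖]),
    Real.le_sqrt_of_sq_le (by linarith [sq_nonneg ‖u k - us‖])⟩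

theorem tendsto_objective (h : IsADMMSeq f C ρ y c u) (hf : ConvexOn ℝ Set.univ f)
    (hC : Convex ℝ C) (hρ : 0 < ρ) (hcs : cs ∈ C)
    (hsaddle : ∀ yy, ∀ cc ∈ C, f cs ≤ f yy + ρ * ⟪us, yy - cc⟫) :
    Tendsto (fun k => f (y (k + 1))) atTop (𝓝 (f cs)) := by
  obtain ⟨hr, hd⟩ := h.tendsto_residuals hf hC hρ hcs hsaddle
  have hbound := h.norm_sub_le_sqrt_lyapunov hf hC hρ hcs hsaddle
  set B := √(admmLyapunov u c us cs 0)
  have hnorm_u : ∀ k, ‖u k‖ ≤ B + ‖us‖ := fun k =>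
    (norm_le_norm_sub_add (u k) us).trans (by linarith [(hbound k).1])
  have hlower : Tendsto (fun k => f cs - ρ * ⟪us, y (k + 1) - c (k + 1)⟫) atTop (𝓝 (f cs)) := by
    simpa using tendsto_const_nhds.sub
      ((tendsto_inner_zero_of_norm_le (fun _ => le_rfl) hr).const_mul ρ)
  have hupper : Tendsto (fun k => f cs - ρ * (⟪u (k + 1), y (k + 1) - c (k + 1)⟫
      + ⟪c (k + 1) - c k, y (k + 1) - c (k + 1)⟫ + ⟪c (k + 1) - cs, c (k + 1) - c k⟫))
      atTop (𝓝 (f cs)) := by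
    have hsum := ((tendsto_inner_zero_of_norm_le (fun k => hnorm_u (k + 1)) hr).add
      (by simpa using hd.inner hr)).add
      (tendsto_inner_zero_of_norm_le (fun k => (hbound (k + 1)).2) hd)
    simpa using tendsto_const_nhds.sub (hsum.const_mul ρ)
  refine tendsto_of_tendsto_of_tendsto_of_le_of_le hlower hupper (fun k => ?_) (fun k => ?_)
  · linarith [hsaddle (y (k + 1)) (c (k + 1)) (h.mem (k + 1))]
  · have hsplit : ⟪c k - u k - y (k + 1), cs - y (k + 1)⟫ = ⟪u (k + 1), y (k + 1) - c (k + 1)⟫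
        + ⟪c (k + 1) - c k, y (k + 1) - c (k + 1)⟫ + ⟪c (k + 1) - cs, c (k + 1) - c k⟫
        - ⟪u (k + 1), cs - c (k + 1)⟫ := by
      simp only [h.dual_succ k, inner_add_left, inner_sub_left, inner_sub_right, real_inner_comm]
      ring
    have hprox := h.prox_le hf k cs
    rw [hsplit] at hprox
    linarith [mul_nonpos_of_nonneg_of_nonpos hρ.le (h.inner_dual_nonpos hC (k + 1) cs hcs)]

end IsADMMSeq

theorem admm_convergence_general (n : ℕ)
    (ftil : EuclideanSpace ℝ (Fin n) → ℝ)
    (hfconv : ConvexOn ℝ Set.univ ftil)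
    (C : Set (EuclideanSpace ℝ (Fin n)))
    (hCcv : Convex ℝ C)
    (ρ : ℝ) (hρ : 0 < ρ)
    (y c u : ℕ → EuclideanSpace ℝ (Fin n))
    (hc0 : c 0 ∈ C) (hu0 : u 0 = 0)
    -- (i) y^{k+1} is the unique minimizer over E of z ↦ f̃(z) + (ρ/2)‖z − c^k + u^k‖²
    (hy : ∀ k, (∀ z : EuclideanSpace ℝ (Fin n),
          ftil (y (k + 1)) + ρ / 2 * ‖y (k + 1) - c k + u k‖ ^ 2
            ≤ ftil z + ρ / 2 * ‖z - c k + u k‖ ^ 2) ∧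
        (∀ z : EuclideanSpace ℝ (Fin n),
          (∀ w : EuclideanSpace ℝ (Fin n),
              ftil z + ρ / 2 * ‖z - c k + u k‖ ^ 2 ≤ ftil w + ρ / 2 * ‖w - c k + u k‖ ^ 2)
            → z = y (k + 1)))
    -- (ii) c^{k+1} is the metric projection of y^{k+1} + u^k onto C
    (hc : ∀ k, c (k + 1) ∈ C ∧
        ∀ w ∈ C, ‖y (k + 1) + u k - c (k + 1)‖ ≤ ‖y (k + 1) + u k - w‖)
    -- (iii) scaled dual update
    (hu : ∀ k, u (k + 1) = u k + y (k + 1) - c (k + 1))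
    -- saddle point of the unaugmented Lagrangian
    (cstar ustar : EuclideanSpace ℝ (Fin n)) (hcstar : cstar ∈ C)
    (hsaddle : ∀ yy : EuclideanSpace ℝ (Fin n), ∀ cc ∈ C,
        ftil cstar ≤ ftil yy + ρ * (inner ℝ ustar (yy - cc) : ℝ)) :
    Filter.Tendsto (fun k => ‖y (k + 1) - c (k + 1)‖) Filter.atTop (nhds 0) ∧
    Filter.Tendsto (fun k => ρ * ‖c (k + 1) - c k‖) Filter.atTop (nhds 0) ∧
    Filter.Tendsto (fun k => ftil (y k)) Filter.atTop (nhds (sInf (ftil '' C))) := by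
  have hadmm : IsADMMSeq ftil C ρ y c u := ⟨hc0, hu0, fun k => (hy k).1, hc, hu⟩
  obtain ⟨hr, hd⟩ := hadmm.tendsto_residuals hfconv hCcv hρ hcstar hsaddle
  have hopt : sInf (ftil '' C) = ftil cstar :=
    IsLeast.csInf_eq ⟨Set.mem_image_of_mem ftil hcstar,
      Set.forall_mem_image.2 fun cc hcc => by simpa using hsaddle cc cc hcc⟩
  refine ⟨tendsto_zero_iff_norm_tendsto_zero.1 hr,
    by simpa using (tendsto_zero_iff_norm_tendsto_zero.1 hd).const_mul ρ, ?_⟩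
  rw [hopt]
  exact (tendsto_add_atTop_iff_nat 1).1
    (hadmm.tendsto_objective hfconv hCcv hρ hcstar hsaddle)

/-- Convergence of ADMM for the consensus problem
`minimize f̃(y) + I_C(c) subject to y = c` on `E = ℝ^n` with the Euclidean norm.
Given the ADMM iterates (proximal step, Euclidean projection onto `C`, scaled dual
update) and a saddle point of the unaugmented Lagrangian, the primal residual
`‖y^{k+1} − c^{k+1}‖ → 0`, the dual residual `ρ‖c^{k+1} − c^k‖ → 0`, and the objective
values `f̃(y^k)` converge to the optimal value `inf_{c ∈ C} f̃(c)`. -/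
theorem admm_convergence (n : ℕ)
    (ftil : EuclideanSpace ℝ (Fin n) → ℝ)
    (hfconv : ConvexOn ℝ Set.univ ftil) (hfcont : Continuous ftil)
    (C : Set (EuclideanSpace ℝ (Fin n)))
    (hCne : C.Nonempty) (hCcp : IsCompact C) (hCcv : Convex ℝ C)
    (ρ : ℝ) (hρ : 0 < ρ)
    (y c u : ℕ → EuclideanSpace ℝ (Fin n))
    (hc0 : c 0 ∈ C) (hu0 : u 0 = 0)
    -- (i) y^{k+1} is the unique minimizer over E of z ↦ f̃(z) + (ρ/2)‖z − c^k + u^k‖²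
    (hy : ∀ k, (∀ z : EuclideanSpace ℝ (Fin n),
          ftil (y (k + 1)) + ρ / 2 * ‖y (k + 1) - c k + u k‖ ^ 2
            ≤ ftil z + ρ / 2 * ‖z - c k + u k‖ ^ 2) ∧
        (∀ z : EuclideanSpace ℝ (Fin n),
          (∀ w : EuclideanSpace ℝ (Fin n),
              ftil z + ρ / 2 * ‖z - c k + u k‖ ^ 2 ≤ ftil w + ρ / 2 * ‖w - c k + u k‖ ^ 2)
            → z = y (k + 1)))
    -- (ii) c^{k+1} is the metric projection of y^{k+1} + u^k onto C
    (hc : ∀ k, c (k + 1) ∈ C ∧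
        ∀ w ∈ C, ‖y (k + 1) + u k - c (k + 1)‖ ≤ ‖y (k + 1) + u k - w‖)
    -- (iii) scaled dual update
    (hu : ∀ k, u (k + 1) = u k + y (k + 1) - c (k + 1))
    -- saddle point of the unaugmented Lagrangian
    (cstar ustar : EuclideanSpace ℝ (Fin n)) (hcstar : cstar ∈ C)
    (hsaddle : ∀ yy : EuclideanSpace ℝ (Fin n), ∀ cc ∈ C,
        ftil cstar ≤ ftil yy + ρ * (inner ℝ ustar (yy - cc) : ℝ)) :
    Filter.Tendsto (fun k => ‖y (k + 1) - c (k + 1)‖) Filter.atTop (nhds 0) ∧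
    Filter.Tendsto (fun k => ρ * ‖c (k + 1) - c k‖) Filter.atTop (nhds 0) ∧
    Filter.Tendsto (fun k => ftil (y k)) Filter.atTop (nhds (sInf (ftil '' C))) :=
  admm_convergence_general n ftil hfconv C hCcv ρ hρ y c u hc0 hu0 hy hc hu cstar ustar hcstar
    hsaddle
end
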